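/- Kronecker's rationality criterion (converse direction): if (a_n) is a sequence of complex numbers such that det(a_{i+j})_{0≤i,j≤n-1} = 0 for all sufficiently large n, then the formal power series Σ a_n x^n is rational, i.e., its coefficients satisfy a linear recurrence with constant coefficients from some index on. -/

import Mathlib

/-!
Let `r` be the largest size whose Hankel determinant `det H_r` is nonzero (it exists since
`det H_0 = 1` and `det H_n` vanishes eventually), and solve a linear system with matrix `H_r` for
`c` such that `a (m + r) = ∑ i, c i * a (m + i)` holds for `m < r`. If this recurrence
holds below some `J ≥ r`, subtract from every row `i ≥ r` of `H_{J+1}` the combination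
`∑ l, c l • row (i - r + l)`. This unitriangular row reduction makes `H_{J+1}` block upper
triangular, with diagonal blocks `H_r` and the Hankel matrix of the residuals
`a (m + r) - ∑ i, c i * a (m + i)` for `m ≥ r`; the latter is anti-triangular with the residual at
`J` on its antidiagonal. Hence `det H_{J+1} = ± det H_r * residual J ^ (J + 1 - r)`, and
`det H_{J+1} = 0` forces the recurrence at `J`. So it holds from the start.
-/

open Matrix Finset

def hankel {α : Type*} (a : ℕ → α) (n : ℕ) : Matrix (Fin n) (Fin n) α :=
  of fun i j => a (i + j)

@[simp]
theorem hankel_apply {α : Type*} (a : ℕ → α) {n : ℕ} (i j : Fin n) :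
    hankel a n i j = a (i + j) := rfl

section CommRing

variable {R : Type*} [CommRing R]

theorem exists_det_hankel_ne_zero_forall_gt [Nontrivial R] {a : ℕ → R}
    (h : ∀ᶠ n in Filter.atTop, (hankel a n).det = 0) :
    ∃ r, (hankel a r).det ≠ 0 ∧ ∀ n, r < n → (hankel a n).det = 0 := by
  classical
  obtain ⟨N, hN⟩ := Filter.eventually_atTop.mp h
  set P : ℕ → Prop := fun n => (hankel a n).det ≠ 0
  have hP0 : P 0 := by simp only [P, det_isEmpty, ne_eq, one_ne_zero, not_false_eq_true]
  refine ⟨Nat.findGreatest P N, Nat.findGreatest_spec (Nat.zero_le N) hP0, fun n hn => ?_⟩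
  by_cases hnN : n ≤ N
  · exact not_not.mp (Nat.findGreatest_is_greatest hn hnN)
  · exact hN n (by omega)

theorem det_hankel_of_forall_lt_eq_zero {u : ℕ → R} {n : ℕ} (hu : ∀ m < n, u m = 0) :
    (hankel u (n + 1)).det =
      Equiv.Perm.sign (Fin.revPerm : Equiv.Perm (Fin (n + 1))) • u n ^ (n + 1) := by
  have htri : ((hankel u (n + 1)).submatrix id Fin.revPerm).det = u n ^ (n + 1) := by
    rw [det_of_isLowerTriangular]
    · simp only [submatrix_apply, id_eq, Fin.revPerm_apply, hankel_apply, Fin.val_rev]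
      rw [prod_congr rfl fun i _ => show u _ = u n from congrArg u (by omega), prod_const,
        card_univ, Fintype.card_fin]
    · intro i j hij
      have hij : i < j := hij
      simp only [submatrix_apply, id_eq, Fin.revPerm_apply, hankel_apply, Fin.val_rev]
      exact hu _ (by omega)
  rw [det_permute', ← zsmul_eq_mul, ← Units.smul_def] at htri
  rw [← htri, smul_smul, Int.units_mul_self, one_smul]

def recurrenceResidual (a : ℕ → R) {r : ℕ} (c : Fin r → R) (m : ℕ) : R :=
  a (m + r) - ∑ i, c i * a (m + i)

/-- Row `i ≥ r` of `(1 - shiftCombination n c) * A` is row `i` of `A` minus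
`∑ l, c l • row (i - r + l)` of `A`; rows `i < r` are left unchanged. -/
def shiftCombination (n : ℕ) {r : ℕ} (c : Fin r → R) : Matrix (Fin n) (Fin n) R :=
  of fun i k => if r ≤ (i : ℕ) then ∑ l : Fin r, if (k : ℕ) = i - r + l then c l else 0 else 0

theorem det_one_sub_shiftCombination (n : ℕ) {r : ℕ} (c : Fin r → R) :
    (1 - shiftCombination n c).det = 1 := by
  have hzero : ∀ i k : Fin n, (i : ℕ) ≤ k → shiftCombination n c i k = 0 := by
    intro i k hik
    simp only [shiftCombination, of_apply]
    split_ifs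
    · exact sum_eq_zero fun l _ => if_neg (by omega)
    · rfl
  rw [det_of_isLowerTriangular]
  · simp [hzero]
  · intro i k hik
    have hik : i < k := hik
    simp [one_apply_ne hik.ne, hzero i k hik.le]

theorem shiftCombination_mul_hankel_apply (a : ℕ → R) {n r : ℕ} (c : Fin r → R)
    (i j : Fin n) :
    (shiftCombination n c * hankel a n) i j =
      if r ≤ (i : ℕ) then ∑ l, c l * a (i - r + j + l) else 0 := by
  simp only [mul_apply, shiftCombination, of_apply, hankel_apply, ite_mul, zero_mul]
  split_ifs with hi
  · simp only [sum_mul, ite_mul, zero_mul]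
    rw [sum_comm]
    refine sum_congr rfl fun l _ => ?_
    rw [Fin.sum_univ_eq_sum_range (fun k => if k = i - r + l then c l * a (k + j) else 0),
      sum_ite_eq_of_mem' _ (i - r + l : ℕ) _ (mem_range.mpr (by omega)), add_right_comm]
  · exact sum_const_zero

theorem one_sub_shiftCombination_mul_hankel_apply (a : ℕ → R) {n r : ℕ} (c : Fin r → R)
    (i j : Fin n) :
    ((1 - shiftCombination n c) * hankel a n) i j =
      if r ≤ (i : ℕ) then recurrenceResidual a c (i - r + j) else a (i + j) := by
  rw [sub_mul, one_mul, Matrix.sub_apply, shiftCombination_mul_hankel_apply, hankel_apply]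
  split_ifs with hi
  · rw [recurrenceResidual, show (i : ℕ) - r + j + r = i + j by omega]
  · exact sub_zero _

theorem det_hankel_add (a : ℕ → R) {r s : ℕ} (c : Fin r → R)
    (hc : ∀ m, m + 1 < r + s → recurrenceResidual a c m = 0) :
    (hankel a (r + s)).det =
      (hankel a r).det * (hankel (fun m => recurrenceResidual a c (r + m)) s).det := by
  have hblocks : ((1 - shiftCombination (r + s) c) * hankel a (r + s)).submatrix
      finSumFinEquiv finSumFinEquiv =
        fromBlocks (hankel a r) (of fun (i : Fin r) (l : Fin s) => a (i + (r + l))) 0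
          (hankel (fun m => recurrenceResidual a c (r + m)) s) := by
    ext (i | k) (j | l) <;>
      simp only [submatrix_apply, one_sub_shiftCombination_mul_hankel_apply,
        finSumFinEquiv_apply_left, finSumFinEquiv_apply_right, Fin.val_castAdd, Fin.val_natAdd,
        fromBlocks_apply₁₁, fromBlocks_apply₁₂, fromBlocks_apply₂₁, fromBlocks_apply₂₂,
        hankel_apply, of_apply, Matrix.zero_apply]
    · rw [if_neg (by omega)]
    · rw [if_neg (by omega)]
    · rw [if_pos (by omega)]
      exact hc _ (by omega)
    · rw [if_pos (by omega)]
      congr 1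
      omega
  calc (hankel a (r + s)).det
      = ((1 - shiftCombination (r + s) c) * hankel a (r + s)).det := by
        rw [det_mul, det_one_sub_shiftCombination, one_mul]
    _ = _ := by rw [← det_submatrix_equiv_self finSumFinEquiv, hblocks, det_fromBlocks_zero₂₁]

theorem recurrenceResidual_eq_zero_of_lt {a : ℕ → R} {r : ℕ} {c : Fin r → R}
    (hc : c ᵥ* hankel a r = fun j : Fin r => a (j + r)) {m : ℕ} (hm : m < r) :
    recurrenceResidual a c m = 0 := by
  have hm := congrFun hc ⟨m, hm⟩
  simp only [vecMul, dotProduct, hankel_apply] at hm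
  rw [recurrenceResidual, sub_eq_zero, ← hm]
  simp only [add_comm m]

theorem recurrenceResidual_eq_zero [IsDomain R] {a : ℕ → R} {r : ℕ} {c : Fin r → R}
    (hr : (hankel a r).det ≠ 0) (hgt : ∀ n, r < n → (hankel a n).det = 0)
    (hc : c ᵥ* hankel a r = fun j : Fin r => a (j + r)) (m : ℕ) :
    recurrenceResidual a c m = 0 := by
  induction m using Nat.strong_induction_on with
  | _ m ih =>
  rcases lt_or_ge m r with hm | hm
  · exact recurrenceResidual_eq_zero_of_lt hc hm
  obtain ⟨t, rfl⟩ := Nat.exists_eq_add_of_le hm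
  have hsplit := det_hankel_add a c (s := t + 1) fun m' hm' => ih m' (by omega)
  rw [hgt _ (by omega), det_hankel_of_forall_lt_eq_zero fun m' hm' => ih _ (by omega)] at hsplit
  simpa [hr, smul_eq_zero_iff_eq] using hsplit.symm

end CommRing

theorem kronecker_converse (a : ℕ → ℂ)
    (h : ∀ᶠ n in Filter.atTop, Matrix.det (fun i j : Fin n => a (i + j)) = 0) :
    ∃ (N d : ℕ) (c : Fin d → ℂ), ∀ n, N ≤ n →
      a (n + d) = ∑ i : Fin d, c i * a (n + i) := by
  obtain ⟨r, hr, hgt⟩ := exists_det_hankel_ne_zero_forall_gt h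
  obtain ⟨c, hc⟩ := vecMul_surjective_iff_isUnit.mpr
    ((isUnit_iff_isUnit_det _).mpr (isUnit_iff_ne_zero.mpr hr)) fun j : Fin r => a (j + r)
  exact ⟨0, r, c, fun n _ => sub_eq_zero.mp (recurrenceResidual_eq_zero hr hgt hc n)⟩
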